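/- Let 0 < π0 < π1 < 1 and let q*(π0,π1) = log((1−π0)/(1−π1)) / log( π1(1−π0) / (π0(1−π1)) ) be the break-even detection probability. Then π0 < q*(π0,π1) < π1; in particular q*(π0,π1) ∈ (0,1). -/

import Mathlib

/-!
The expected log-evidence increment `m(q) = q log(π₁/π₀) + (1-q) log((1-π₁)/(1-π₀))` is affine
in `q` and `q*` is its zero. By the strict inequality `log x < x - 1` (Gibbs), `m(π₀)` is minus a
Kullback–Leibler divergence and `m(π₁)` a Kullback–Leibler divergence between distinct Bernoulli
laws, so `m(π₀) < 0 < m(π₁)`, and the zero of `m` lies strictly between `π₀` and `π₁`.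
-/

/-- Break-even detection probability `q*(π0, π1)`. -/
noncomputable def qstar (π0 π1 : ℝ) : ℝ :=
  Real.log ((1 - π0) / (1 - π1)) / Real.log (π1 * (1 - π0) / (π0 * (1 - π1)))

open Real

/-- The expected log-evidence increment `m(q; π0, π1)` of the paper. -/
noncomputable def logEvidenceDrift (π0 π1 q : ℝ) : ℝ :=
  q * log (π1 / π0) + (1 - q) * log ((1 - π1) / (1 - π0))

lemma mul_log_div_lt_sub {p r : ℝ} (hp : 0 < p) (hr : 0 < r) (hpr : p ≠ r) :
    p * log (r / p) < r - p := by
  have hlog := log_lt_sub_one_of_pos (div_pos hr hp)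
    (by rwa [ne_eq, div_eq_one_iff_eq hp.ne', eq_comm])
  calc p * log (r / p) < p * (r / p - 1) := mul_lt_mul_of_pos_left hlog hp
    _ = r - p := by field_simp

lemma sub_lt_mul_log_div {p r : ℝ} (hp : 0 < p) (hr : 0 < r) (hpr : p ≠ r) :
    p - r < p * log (p / r) := by
  have h := mul_log_div_lt_sub hp hr hpr
  rw [← inv_div, log_inv] at h
  linarith

lemma logEvidenceDrift_at_lower_neg {π0 π1 : ℝ} (hπ0 : 0 < π0) (hπ01 : π0 < π1) (hπ1 : π1 < 1) :
    logEvidenceDrift π0 π1 π0 < 0 := by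
  have h₁ := mul_log_div_lt_sub hπ0 (hπ0.trans hπ01) hπ01.ne
  have h₂ := mul_log_div_lt_sub (by linarith : 0 < 1 - π0) (by linarith : 0 < 1 - π1)
    (by linarith : 1 - π0 ≠ 1 - π1)
  unfold logEvidenceDrift
  linarith

lemma logEvidenceDrift_at_upper_pos {π0 π1 : ℝ} (hπ0 : 0 < π0) (hπ01 : π0 < π1) (hπ1 : π1 < 1) :
    0 < logEvidenceDrift π0 π1 π1 := by
  have h₁ := sub_lt_mul_log_div (hπ0.trans hπ01) hπ0 hπ01.ne'
  have h₂ := sub_lt_mul_log_div (by linarith : 0 < 1 - π1) (by linarith : 0 < 1 - π0)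
    (by linarith : 1 - π1 ≠ 1 - π0)
  unfold logEvidenceDrift
  linarith

lemma logEvidenceDrift_eq_mul_sub {π0 π1 : ℝ} (hπ0 : π0 ≠ 0) (hπ1 : π1 ≠ 0)
    (hπ0' : 1 - π0 ≠ 0) (hπ1' : 1 - π1 ≠ 0) (q : ℝ) :
    logEvidenceDrift π0 π1 q =
      q * log (π1 * (1 - π0) / (π0 * (1 - π1))) - log ((1 - π0) / (1 - π1)) := by
  unfold logEvidenceDrift
  rw [log_div hπ1 hπ0, log_div hπ1' hπ0', log_div hπ0' hπ1',
    log_div (mul_ne_zero hπ1 hπ0') (mul_ne_zero hπ0 hπ1'), log_mul hπ1 hπ0', log_mul hπ0 hπ1']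
  ring

lemma div_mem_Ioo_of_mul_sub_sign_change {s c x y : ℝ} (hxy : x < y)
    (hx : x * s - c < 0) (hy : 0 < y * s - c) : x < c / s ∧ c / s < y := by
  have hs : 0 < s := by nlinarith
  exact ⟨by rw [lt_div_iff₀ hs]; linarith, by rw [div_lt_iff₀ hs]; linarith⟩

/-- The break-even detection probability lies strictly between `π0` and `π1`;
in particular it lies in `(0,1)`. -/
theorem stmt10 (π0 π1 : ℝ) (hπ0 : 0 < π0) (hπ01 : π0 < π1) (hπ1 : π1 < 1) :
    π0 < qstar π0 π1 ∧ qstar π0 π1 < π1 ∧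
    0 < qstar π0 π1 ∧ qstar π0 π1 < 1 := by
  have hlower := logEvidenceDrift_at_lower_neg hπ0 hπ01 hπ1
  have hupper := logEvidenceDrift_at_upper_pos hπ0 hπ01 hπ1
  rw [logEvidenceDrift_eq_mul_sub hπ0.ne' (hπ0.trans hπ01).ne' (by linarith) (by linarith)]
    at hlower hupper
  obtain ⟨hleft, hright⟩ := div_mem_Ioo_of_mul_sub_sign_change hπ01 hlower hupper
  exact ⟨hleft, hright, hπ0.trans hleft, hright.trans hπ1⟩
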